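/- arXiv:2512.05962 — 6 statements merged into one kernel-verified Lean document; each statement's English description precedes it below -/
import Mathlib

section
/- Let Y be a finite type, let n be a natural number, and let π : ℝⁿ → Y → ℝ be such that for every θ ∈ ℝⁿ, π θ is a strictly positive probability mass function on Y (π θ y > 0 for all y and ∑_y π θ y = 1), and for each y the map θ ↦ π θ y is differentiable on ℝⁿ. Let π_ref be a probability mass function on Y with π_ref y > 0 for all y, let v : Y → ℝ, let β > 0, and define Z_β := ∑_y π_ref(y)·exp(v(y)/β) and p_β(y) := π_ref(y)·exp(v(y)/β)/Z_β. Then for every θ, the gradient with respect to θ of the reverse Kullback–Leibler divergence θ ↦ ∑_y π θ y · log(π θ y / p_β(y)) equals −∑_y (v(y)/β − log(π θ y / π_ref(y))) · ∇_θ(π θ y); equivalently, it equals −(1/β) times the gradient of θ ↦ ∑_y π θ y · (v(y) − β·log(π θ y / π_ref(y))). -/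
/-!
Since `log (π θ y / p_β y) = log (π θ y / π_ref y) - v y / β + log Z_β` and `π θ` sums to one,
the reverse KL divergence equals `log Z_β - (1/β) R θ`, where `R` is the regularized reward;
this gives the second formula without differentiating anything. For the first, the derivative
of `∑ y, π θ y * log (π θ y / c y)` is `∑ y, (log (π θ y / c y) + 1) • ∇ π θ y`, and any
constant added to the coefficients drops out because `∑ y, ∇ π θ y = ∇ 1 = 0`.
-/

open Finset Real

section Calculus

variable {E : Type*} [NormedAddCommGroup E] [NormedSpace ℝ E]

theorem HasFDerivAt.mul_log_div {f : E → ℝ} {f' : E →L[ℝ] ℝ} {x : E} (hf : HasFDerivAt f f' x)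
    (hx : f x ≠ 0) {c : ℝ} (hc : c ≠ 0) :
    HasFDerivAt (fun x => f x * Real.log (f x / c)) ((Real.log (f x / c) + 1) • f') x := by
  have hlog : HasFDerivAt (fun x => Real.log (f x / c)) ((f x)⁻¹ • f') x := by
    have hdiv : HasFDerivAt (fun x => f x / c) (c⁻¹ • f') x := by
      simpa only [div_eq_mul_inv, mul_comm _ c⁻¹, smul_eq_mul] using hf.const_mul c⁻¹
    refine (hdiv.log (div_ne_zero hx hc)).congr_fderiv ?_
    rw [smul_smul, inv_div]
    field_simp
  refine (hf.fun_mul hlog).congr_fderiv ?_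
  rw [smul_smul, mul_inv_cancel₀ hx, add_smul, one_smul, add_comm]

variable {Y : Type*} [Fintype Y]

theorem hasFDerivAt_sum_mul_log_div {f : E → Y → ℝ} {x : E}
    (hf : ∀ y, DifferentiableAt ℝ (fun x => f x y) x) (hx : ∀ y, f x y ≠ 0) {c : Y → ℝ}
    (hc : ∀ y, c y ≠ 0) :
    HasFDerivAt (fun x => ∑ y, f x y * log (f x y / c y))
      (∑ y, (log (f x y / c y) + 1) • fderiv ℝ (fun x => f x y) x) x :=
  HasFDerivAt.fun_sum fun y _ => HasFDerivAt.mul_log_div (hf y).hasFDerivAt (hx y) (hc y)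

theorem sum_fderiv_eq_zero_of_sum_const {f : E → Y → ℝ} {x : E}
    (hf : ∀ y, DifferentiableAt ℝ (fun x => f x y) x) {s : ℝ} (hs : ∀ x, ∑ y, f x y = s) :
    ∑ y, fderiv ℝ (fun x => f x y) x = 0 := by
  have hsum : HasFDerivAt (fun x => ∑ y, f x y) (∑ y, fderiv ℝ (fun x => f x y) x) x :=
    HasFDerivAt.fun_sum fun y _ => (hf y).hasFDerivAt
  rw [funext hs] at hsum
  exact hsum.unique (hasFDerivAt_const s x)

end Calculus

theorem sum_add_const_smul_of_sum_eq_zero {Y M : Type*} [Fintype Y] [AddCommGroup M] [Module ℝ M]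
    {D : Y → M} (hD : ∑ y, D y = 0) (a : Y → ℝ) (K : ℝ) :
    ∑ y, (a y + K) • D y = ∑ y, a y • D y := by
  simp only [add_smul, sum_add_distrib, ← smul_sum, hD, smul_zero, add_zero]

section Gibbs

theorem log_div_gibbs {p r Z : ℝ} (hp : p ≠ 0) (hr : r ≠ 0) (hZ : Z ≠ 0) (t : ℝ) :
    log (p / (r * exp t / Z)) = log (p / r) - t + log Z := by
  rw [log_div hp (div_ne_zero (mul_ne_zero hr (exp_ne_zero t)) hZ),
    log_div (mul_ne_zero hr (exp_ne_zero t)) hZ, log_mul hr (exp_ne_zero t), log_exp,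
    log_div hp hr]
  ring

variable {Y : Type*} [Fintype Y]

theorem sum_mul_log_div_gibbs {p r v : Y → ℝ} (hp : ∀ y, p y ≠ 0) (hp1 : ∑ y, p y = 1)
    (hr : ∀ y, r y ≠ 0) {β Z : ℝ} (hβ : β ≠ 0) (hZ : Z ≠ 0) :
    ∑ y, p y * log (p y / (r y * exp (v y / β) / Z))
      = log Z - (1 / β) * ∑ y, p y * (v y - β * log (p y / r y)) := by
  have hterm : ∀ y, p y * log (p y / (r y * exp (v y / β) / Z))
      = log Z * p y - (1 / β) * (p y * (v y - β * log (p y / r y))) := by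
    intro y
    rw [log_div_gibbs (hp y) (hr y) hZ]
    field_simp
    ring
  rw [sum_congr rfl fun y _ => hterm y, sum_sub_distrib, ← mul_sum, ← mul_sum, hp1, mul_one]

end Gibbs

theorem stmt_0_general {Y : Type*} [Fintype Y] (n : ℕ)
    (pol : (Fin n → ℝ) → Y → ℝ)
    (hpos : ∀ θ y, 0 < pol θ y)
    (hsum : ∀ θ, ∑ y, pol θ y = 1)
    (hdiff : ∀ y, Differentiable ℝ (fun θ => pol θ y))
    (pref : Y → ℝ) (hrefpos : ∀ y, 0 < pref y)
    (v : Y → ℝ) (β : ℝ) (hβ : 0 < β)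
    (Zβ : ℝ) (hZβ : Zβ = ∑ y, pref y * Real.exp (v y / β))
    (pβ : Y → ℝ) (hpβ : ∀ y, pβ y = pref y * Real.exp (v y / β) / Zβ)
    (θ : Fin n → ℝ) :
    fderiv ℝ (fun θ' => ∑ y, pol θ' y * Real.log (pol θ' y / pβ y)) θ
      = -∑ y, (v y / β - Real.log (pol θ y / pref y)) • fderiv ℝ (fun θ' => pol θ' y) θ
    ∧
    fderiv ℝ (fun θ' => ∑ y, pol θ' y * Real.log (pol θ' y / pβ y)) θ
      = -((1 / β) •
          fderiv ℝ (fun θ' => ∑ y, pol θ' y * (v y - β * Real.log (pol θ' y / pref y))) θ) := by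
  obtain rfl : pβ = fun y => pref y * exp (v y / β) / Zβ := funext hpβ
  have hpol (θ y) : pol θ y ≠ 0 := (hpos θ y).ne'
  have href (y) : pref y ≠ 0 := (hrefpos y).ne'
  have hZ : Zβ ≠ 0 := by
    have : Nonempty Y := by
      by_contra h
      simpa [not_nonempty_iff.mp h] using hsum θ
    rw [hZβ]
    exact (sum_pos (fun y _ => mul_pos (hrefpos y) (exp_pos _)) univ_nonempty).ne'
  have hgibbs (y) : pref y * exp (v y / β) / Zβ ≠ 0 :=
    div_ne_zero (mul_ne_zero (href y) (exp_ne_zero _)) hZ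
  constructor
  · have hcoef (y) : log (pol θ y / (pref y * exp (v y / β) / Zβ)) + 1
        = -(v y / β - log (pol θ y / pref y)) + (log Zβ + 1) := by
      rw [log_div_gibbs (hpol θ y) (href y) hZ]
      ring
    rw [(hasFDerivAt_sum_mul_log_div (fun y => hdiff y θ) (hpol θ) hgibbs).fderiv]
    simp only [hcoef, sum_add_const_smul_of_sum_eq_zero
      (sum_fderiv_eq_zero_of_sum_const (fun y => hdiff y θ) hsum), neg_smul, sum_neg_distrib]
  · have hKL : (fun θ' => ∑ y, pol θ' y * log (pol θ' y / (pref y * exp (v y / β) / Zβ)))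
        = fun θ' => log Zβ - (1 / β) * ∑ y, pol θ' y * (v y - β * log (pol θ' y / pref y)) :=
      funext fun θ' => sum_mul_log_div_gibbs (hpol θ') (hsum θ') href hβ.ne' hZ
    rw [hKL, fderiv_const_sub]
    exact congrArg Neg.neg (congrFun (fderiv_const_smul_field (1 / β)) θ)

/-- Gradient of the reverse KL divergence to the Gibbs target `p_β`
equals minus the sum of the RLVR pseudo-rewards times the gradients of the policy
probabilities; equivalently it is `-(1/β)` times the gradient of the expected
regularized reward. -/
theorem stmt_0 {Y : Type*} [Fintype Y] (n : ℕ)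
    (pol : (Fin n → ℝ) → Y → ℝ)
    (hpos : ∀ θ y, 0 < pol θ y)
    (hsum : ∀ θ, ∑ y, pol θ y = 1)
    (hdiff : ∀ y, Differentiable ℝ (fun θ => pol θ y))
    (pref : Y → ℝ) (hrefpos : ∀ y, 0 < pref y) (hrefsum : ∑ y, pref y = 1)
    (v : Y → ℝ) (β : ℝ) (hβ : 0 < β)
    (Zβ : ℝ) (hZβ : Zβ = ∑ y, pref y * Real.exp (v y / β))
    (pβ : Y → ℝ) (hpβ : ∀ y, pβ y = pref y * Real.exp (v y / β) / Zβ)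
    (θ : Fin n → ℝ) :
    fderiv ℝ (fun θ' => ∑ y, pol θ' y * Real.log (pol θ' y / pβ y)) θ
      = -∑ y, (v y / β - Real.log (pol θ y / pref y)) • fderiv ℝ (fun θ' => pol θ' y) θ
    ∧
    fderiv ℝ (fun θ' => ∑ y, pol θ' y * Real.log (pol θ' y / pβ y)) θ
      = -((1 / β) •
          fderiv ℝ (fun θ' => ∑ y, pol θ' y * (v y - β * Real.log (pol θ' y / pref y))) θ) :=
  stmt_0_general n pol hpos hsum hdiff pref hrefpos v β hβ Zβ hZβ pβ hpβ θ
end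

section
/- Let Y be a countable type, let π_base be a probability mass function on Y, let r : Y → {0,1}, and set Z := ∑_y π_base(y)·r(y); assume 0 < Z ≤ 1. Define p(y) := π_base(y)·r(y)/Z, and for every β > 0 define Z_β := ∑_y π_base(y)·exp(r(y)/β) and p_β(y) := π_base(y)·exp(r(y)/β)/Z_β. Then for every fixed y ∈ Y, p_β(y) converges to p(y) as β tends to 0 from the right. -/
open Filter Topology

/-!
Since `r` takes only the values `0` and `1`, `exp (r y / β) = 1 - r y + r y · t` with
`t = exp (1 / β)`. Hence, by linearity of the sum, `p_β(y)` is the ratio of affine functions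
`(π_base(y)(1 - r y) + π_base(y) r y · t) / ((1 - Z) + Z t)`, and `t → ∞` as `β → 0⁺`, so the
ratio tends to the quotient `π_base(y) r y / Z` of the leading coefficients.
-/

theorem Real.exp_div_of_eq_zero_or_eq_one {x : ℝ} (hx : x = 0 ∨ x = 1) (β : ℝ) :
    Real.exp (x / β) = 1 - x + x * Real.exp β⁻¹ := by
  rcases hx with rfl | rfl <;> simp [div_eq_mul_inv]

theorem tsum_mul_exp_div_of_eq_zero_or_eq_one {Y : Type*} {w r : Y → ℝ} (hw : Summable w)
    (hwr : Summable fun y => w y * r y) (hr : ∀ y, r y = 0 ∨ r y = 1) (β : ℝ) :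
    ∑' y, w y * Real.exp (r y / β)
      = (∑' y, w y) - ∑' y, w y * r y + (∑' y, w y * r y) * Real.exp β⁻¹ := by
  have hterm : ∀ y, w y * Real.exp (r y / β) = w y - w y * r y + w y * r y * Real.exp β⁻¹ := by
    intro y
    rw [Real.exp_div_of_eq_zero_or_eq_one (hr y)]
    ring
  rw [tsum_congr hterm, (hw.sub hwr).tsum_add (hwr.mul_right _), hw.tsum_sub hwr, tsum_mul_right]

theorem tendsto_add_mul_div_add_mul_atTop (a b c : ℝ) {d : ℝ} (hd : d ≠ 0) :
    Tendsto (fun t => (a + b * t) / (c + d * t)) atTop (𝓝 (b / d)) := by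
  have hrw : ∀ᶠ t : ℝ in atTop, (a + b * t) / (c + d * t) = (a * t⁻¹ + b) / (c * t⁻¹ + d) := by
    filter_upwards [eventually_gt_atTop 0] with t ht
    rw [← mul_div_mul_right _ _ (inv_ne_zero ht.ne')]
    field_simp
  rw [tendsto_congr' hrw]
  have hinv := tendsto_inv_atTop_zero (𝕜 := ℝ)
  have hlim := ((hinv.const_mul a).add_const b).div ((hinv.const_mul c).add_const d)
    (by simpa using hd)
  simp only [mul_zero, zero_add] at hlim
  exact hlim

theorem summable_of_tsum_ne_zero {Y : Type*} {f : Y → ℝ} (h : ∑' y, f y ≠ 0) : Summable f :=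
  by_contra fun hf => h (tsum_eq_zero_of_not_summable hf)

theorem stmt_1_general {Y : Type*}
    (pbase : Y → ℝ) (hsum : ∑' y, pbase y = 1)
    (r : Y → ℝ) (hr : ∀ y, r y = 0 ∨ r y = 1)
    (Z : ℝ) (hZ : Z = ∑' y, pbase y * r y) (hZpos : 0 < Z)
    (p : Y → ℝ) (hp : ∀ y, p y = pbase y * r y / Z)
    (pβ : ℝ → Y → ℝ)
    (hpβ : ∀ β, 0 < β → ∀ y,
      pβ β y = pbase y * Real.exp (r y / β) / (∑' y', pbase y' * Real.exp (r y' / β)))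
    (y : Y) :
    Tendsto (fun β => pβ β y) (𝓝[>] (0 : ℝ)) (𝓝 (p y)) := by
  have hw : Summable pbase := summable_of_tsum_ne_zero (by simp [hsum])
  have hwr : Summable fun y => pbase y * r y := summable_of_tsum_ne_zero (hZ ▸ hZpos.ne')
  have hform : ∀ᶠ β in 𝓝[>] (0 : ℝ), pβ β y =
      (pbase y * (1 - r y) + pbase y * r y * Real.exp β⁻¹) / (1 - Z + Z * Real.exp β⁻¹) := by
    filter_upwards [self_mem_nhdsWithin] with β hβ
    rw [hpβ β hβ y, tsum_mul_exp_div_of_eq_zero_or_eq_one hw hwr hr, hsum, ← hZ,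
      Real.exp_div_of_eq_zero_or_eq_one (hr y)]
    ring
  rw [tendsto_congr' hform, hp y]
  exact (tendsto_add_mul_div_add_mul_atTop _ _ _ hZpos.ne').comp
    (Real.tendsto_exp_atTop.comp tendsto_inv_nhdsGT_zero)

/-- Pointwise convergence of the Gibbs distribution `p_β` to the
filtered distribution `p` as `β → 0⁺`. -/
theorem stmt_1 {Y : Type*} [Countable Y]
    (pbase : Y → ℝ) (hnn : ∀ y, 0 ≤ pbase y) (hsum : ∑' y, pbase y = 1)
    (r : Y → ℝ) (hr : ∀ y, r y = 0 ∨ r y = 1)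
    (Z : ℝ) (hZ : Z = ∑' y, pbase y * r y) (hZpos : 0 < Z) (hZle : Z ≤ 1)
    (p : Y → ℝ) (hp : ∀ y, p y = pbase y * r y / Z)
    (pβ : ℝ → Y → ℝ)
    (hpβ : ∀ β, 0 < β → ∀ y,
      pβ β y = pbase y * Real.exp (r y / β) / (∑' y', pbase y' * Real.exp (r y' / β)))
    (y : Y) :
    Tendsto (fun β => pβ β y) (𝓝[>] (0 : ℝ)) (𝓝 (p y)) :=
  stmt_1_general pbase hsum r hr Z hZ hZpos p hp pβ hpβ y
end

section
/- Let Y be a countable type, let π_base be a probability mass function on Y, let r : Y → {0,1}, and set Z := ∑_y π_base(y)·r(y); assume Z > 0, and define p(y) := π_base(y)·r(y)/Z. Let q be any probability mass function on Y such that q(y) = 0 whenever r(y) = 0, q(y) > 0 implies π_base(y) > 0, and the function y ↦ q(y)·log(q(y)/π_base(y)) is summable (with convention 0·log(0/t) = 0). Then KL(q‖π_base) := ∑_y q(y)·log(q(y)/π_base(y)) ≥ −log Z, and equality holds if and only if q = p. -/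
/-!
Writing `p = π_base · r / Z`, on the support of `q` (where `r = 1`) one has
`q log (q / p) = q log (q / π_base) + q log Z`, so `KL(q‖π_base) = KL(q‖p) - log Z`.
Gibbs' inequality `KL(q‖p) ≥ 0`, with equality only for `q = p`, follows from
`q log (q / p) - (q - p) = p · klFun (q / p)` with `klFun x = x log x + 1 - x ≥ 0`
vanishing only at `x = 1`, after summing: the terms `q - p` sum to zero.
-/

open Real InformationTheory

theorem summable_of_tsum_ne_zero_s7 {ι α : Type*} [AddCommMonoid α] [TopologicalSpace α]
    {f : ι → α} (h : ∑' i, f i ≠ 0) : Summable f :=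
  not_not.mp fun hf => h (tsum_eq_zero_of_not_summable hf)

theorem mul_log_div_sub_sub_eq_mul_klFun {a b : ℝ} (hab : a ≠ 0 → b ≠ 0) :
    a * log (a / b) - (a - b) = b * klFun (a / b) := by
  rcases eq_or_ne a 0 with rfl | ha
  · simp [klFun_zero]
  · have hb := hab ha
    rw [klFun_apply]
    field_simp
    ring

theorem mul_klFun_div_eq_zero_iff {a b : ℝ} (ha : 0 ≤ a) (hb : 0 ≤ b) (hab : a ≠ 0 → b ≠ 0) :
    b * klFun (a / b) = 0 ↔ a = b := by
  rcases hb.eq_or_lt with rfl | hb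
  · simpa [eq_comm] using not_imp_not.mp hab
  · rw [mul_eq_zero, klFun_eq_zero_iff (div_nonneg ha hb.le), div_eq_one_iff_eq hb.ne']
    simp [hb.ne']

theorem mul_log_div_div_eq_add {a b c : ℝ} (hab : a ≠ 0 → b ≠ 0) (hc : c ≠ 0) :
    a * log (a / (b / c)) = a * log (a / b) + a * log c := by
  rcases eq_or_ne a 0 with rfl | ha
  · simp
  · rw [div_div_eq_mul_div, mul_div_right_comm, log_mul (div_ne_zero ha (hab ha)) hc, mul_add]

section Gibbs

variable {ι : Type*} {q p : ι → ℝ} {s D : ℝ}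

theorem HasSum.mul_klFun_div (hD : HasSum (fun i => q i * log (q i / p i)) D) (hq : HasSum q s)
    (hp : HasSum p s) (hqp : ∀ i, q i ≠ 0 → p i ≠ 0) :
    HasSum (fun i => p i * klFun (q i / p i)) D := by
  simpa only [sub_self, sub_zero, mul_log_div_sub_sub_eq_mul_klFun (hqp _)] using
    hD.sub (hq.sub hp)

theorem gibbs_nonneg (hq0 : ∀ i, 0 ≤ q i) (hp0 : ∀ i, 0 ≤ p i) (hq : HasSum q s)
    (hp : HasSum p s) (hqp : ∀ i, q i ≠ 0 → p i ≠ 0)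
    (hD : HasSum (fun i => q i * log (q i / p i)) D) : 0 ≤ D :=
  (hD.mul_klFun_div hq hp hqp).nonneg fun i =>
    mul_nonneg (hp0 i) (klFun_nonneg (div_nonneg (hq0 i) (hp0 i)))

theorem gibbs_eq_zero_iff (hq0 : ∀ i, 0 ≤ q i) (hp0 : ∀ i, 0 ≤ p i) (hq : HasSum q s)
    (hp : HasSum p s) (hqp : ∀ i, q i ≠ 0 → p i ≠ 0)
    (hD : HasSum (fun i => q i * log (q i / p i)) D) : D = 0 ↔ q = p := by
  have hK := hD.mul_klFun_div hq hp hqp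
  have hK0 : D = 0 ↔ HasSum (fun i => p i * klFun (q i / p i)) 0 :=
    ⟨fun h => h ▸ hK, hK.unique⟩
  rw [hK0, hasSum_zero_iff_of_nonneg fun i =>
    mul_nonneg (hp0 i) (klFun_nonneg (div_nonneg (hq0 i) (hp0 i)))]
  simp only [funext_iff, Pi.zero_apply, mul_klFun_div_eq_zero_iff (hq0 _) (hp0 _) (hqp _)]

end Gibbs

theorem stmt_7_general {Y : Type*}
    (pbase : Y → ℝ) (hnn : ∀ y, 0 ≤ pbase y)
    (r : Y → ℝ) (hr : ∀ y, r y = 0 ∨ r y = 1)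
    (Z : ℝ) (hZ : Z = ∑' y, pbase y * r y) (hZpos : 0 < Z)
    (p : Y → ℝ) (hp : ∀ y, p y = pbase y * r y / Z)
    (q : Y → ℝ) (hqnn : ∀ y, 0 ≤ q y) (hqsum : ∑' y, q y = 1)
    (hsupp : ∀ y, r y = 0 → q y = 0)
    (habs : ∀ y, 0 < q y → 0 < pbase y)
    (hsummable : Summable (fun y => q y * Real.log (q y / pbase y))) :
    -Real.log Z ≤ ∑' y, q y * Real.log (q y / pbase y)
    ∧ ((∑' y, q y * Real.log (q y / pbase y)) = -Real.log Z ↔ q = p) := by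
  have hq : HasSum q 1 := hqsum ▸ (summable_of_tsum_ne_zero_s7 (hqsum ▸ one_ne_zero)).hasSum
  have hpsum : HasSum p 1 := by
    have h := (summable_of_tsum_ne_zero_s7 (hZ ▸ hZpos.ne')).hasSum.div_const Z
    rwa [← hZ, div_self hZpos.ne', ← funext hp] at h
  have hpnn : ∀ y, 0 ≤ p y := fun y => by
    rcases hr y with h | h <;> simp [hp, h, div_nonneg (hnn y) hZpos.le]
  have hp_supp : ∀ y, q y ≠ 0 → p y = pbase y / Z := fun y hy => by
    rw [hp, (hr y).resolve_left (mt (hsupp y) hy), mul_one]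
  have hq_pbase : ∀ y, q y ≠ 0 → pbase y ≠ 0 := fun y hy =>
    (habs y ((hqnn y).lt_of_ne' hy)).ne'
  have hqp : ∀ y, q y ≠ 0 → p y ≠ 0 := fun y hy => by
    rw [hp_supp y hy]; exact div_ne_zero (hq_pbase y hy) hZpos.ne'
  have hKL : HasSum (fun y => q y * log (q y / p y))
      ((∑' y, q y * log (q y / pbase y)) + log Z) := by
    have h := hsummable.hasSum.add (hq.mul_right (log Z))
    rw [one_mul] at h
    refine h.congr_fun fun y => ?_
    rcases eq_or_ne (q y) 0 with h0 | hy
    · simp [h0]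
    · rw [hp_supp y hy, mul_log_div_div_eq_add (fun _ => hq_pbase y hy) hZpos.ne']
  have hnonneg := gibbs_nonneg hqnn hpnn hq hpsum hqp hKL
  have heq := gibbs_eq_zero_iff hqnn hpnn hq hpsum hqp hKL
  refine ⟨by linarith, ?_⟩
  rw [← heq]
  constructor <;> intro h <;> linarith

/-- The filtered distribution `p` is the I-projection of `π_base` onto
the set of distributions supported where `r = 1`: any such pmf `q` satisfies
`KL(q‖π_base) ≥ −log Z`, with equality iff `q = p`. -/
theorem stmt_7 {Y : Type*} [Countable Y]
    (pbase : Y → ℝ) (hnn : ∀ y, 0 ≤ pbase y) (hsum : ∑' y, pbase y = 1)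
    (r : Y → ℝ) (hr : ∀ y, r y = 0 ∨ r y = 1)
    (Z : ℝ) (hZ : Z = ∑' y, pbase y * r y) (hZpos : 0 < Z)
    (p : Y → ℝ) (hp : ∀ y, p y = pbase y * r y / Z)
    (q : Y → ℝ) (hqnn : ∀ y, 0 ≤ q y) (hqsum : ∑' y, q y = 1)
    (hsupp : ∀ y, r y = 0 → q y = 0)
    (habs : ∀ y, 0 < q y → 0 < pbase y)
    (hsummable : Summable (fun y => q y * Real.log (q y / pbase y))) :
    -Real.log Z ≤ ∑' y, q y * Real.log (q y / pbase y)
    ∧ ((∑' y, q y * Real.log (q y / pbase y)) = -Real.log Z ↔ q = p) :=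
  stmt_7_general pbase hnn r hr Z hZ hZpos p hp q hqnn hqsum hsupp habs hsummable
end

section
/- Let Y be a countable type, let α ∈ (0,1), and let π and p be probability mass functions on Y. Let A := {y | p(y) > 0} and define f_α(t) := (t^α − α·t − (1 − α))/(α·(α − 1)). Then the functions y ↦ p(y)·f_α(π(y)/p(y)) (restricted to A) and y ↦ π(y)^α·p(y)^{1−α} are summable, and the extended α-divergence satisfies D_α(π,p) := ∑_{y ∈ A} p(y)·f_α(π(y)/p(y)) + (∑_{y ∉ A} π(y))/(1 − α) = (1 − H_α(π,p))/(α·(1 − α)), where H_α(π,p) := ∑_y π(y)^α·p(y)^{1−α} is the Hellinger sum. -/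
/-!
On `A = {p > 0}` one has `p · f_α(π/p) = (π^α p^(1-α) - α π - (1-α) p) / (α(α-1))`,
and off `A` the Hellinger summand `π^α p^(1-α)` vanishes. Summing, the divergence part becomes
`(H_α - α π(A) - (1-α)) / (α(α-1))`, while the boundary term is `(1 - π(A)) / (1-α)`;
the two `π(A)` contributions cancel. Summability of the Hellinger sum comes from weighted AM-GM,
`π^α p^(1-α) ≤ α π + (1-α) p`.
-/

open Real

lemma summable_of_tsum_eq_one {Y : Type*} {f : Y → ℝ} (hf : ∑' y, f y = 1) : Summable f := by
  by_contra h
  simp [tsum_eq_zero_of_not_summable h] at hf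

section AlphaDivergence

variable {Y : Type*} {α : ℝ} {q p : Y → ℝ}

lemma summable_rpow_mul_rpow_one_sub (hα0 : 0 ≤ α) (hα1 : α ≤ 1)
    (hqnn : ∀ y, 0 ≤ q y) (hpnn : ∀ y, 0 ≤ p y) (hq : Summable q) (hp : Summable p) :
    Summable (fun y => q y ^ α * p y ^ (1 - α)) :=
  Summable.of_nonneg_of_le
    (fun y => mul_nonneg (rpow_nonneg (hqnn y) _) (rpow_nonneg (hpnn y) _))
    (fun y => geom_mean_le_arith_mean2_weighted hα0 (sub_nonneg.2 hα1) (hqnn y) (hpnn y)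
      (by ring))
    ((hq.mul_left α).add (hp.mul_left (1 - α)))

lemma mul_alphaFun_div_eq {x t : ℝ} (hx : 0 ≤ x) (ht : 0 < t) :
    t * (((x / t) ^ α - α * (x / t) - (1 - α)) / (α * (α - 1)))
      = (x ^ α * t ^ (1 - α) - α * x - (1 - α) * t) / (α * (α - 1)) := by
  rw [div_rpow hx ht.le, rpow_sub ht, rpow_one]
  field_simp

lemma ite_pos_mul_alphaFun_div_eq (hα1 : α < 1) {x t : ℝ} (hx : 0 ≤ x) (ht : 0 ≤ t) :
    (if 0 < t then t * (((x / t) ^ α - α * (x / t) - (1 - α)) / (α * (α - 1))) else 0)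
      = (x ^ α * t ^ (1 - α) - α * (if 0 < t then x else 0) - (1 - α) * t)
          / (α * (α - 1)) := by
  rcases ht.lt_or_eq with ht | rfl
  · simp only [if_pos ht, mul_alphaFun_div_eq hx ht]
  · simp [zero_rpow (sub_ne_zero.2 hα1.ne')]

lemma summable_ite_pos (hqnn : ∀ y, 0 ≤ q y) (hq : Summable q) :
    Summable (fun y => if 0 < p y then q y else 0) :=
  hq.of_nonneg_of_le (fun y => by split <;> simp [hqnn y]) (fun y => by split <;> simp [hqnn y])

lemma hasSum_ite_pos_mul_alphaFun_div (hα0 : 0 < α) (hα1 : α < 1)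
    (hqnn : ∀ y, 0 ≤ q y) (hpnn : ∀ y, 0 ≤ p y) (hq : Summable q) (hp : Summable p) :
    HasSum (fun y => if 0 < p y then
        p y * (((q y / p y) ^ α - α * (q y / p y) - (1 - α)) / (α * (α - 1))) else 0)
      (((∑' y, q y ^ α * p y ^ (1 - α)) - α * (∑' y, if 0 < p y then q y else 0)
          - (1 - α) * ∑' y, p y) / (α * (α - 1))) := by
  simp only [ite_pos_mul_alphaFun_div_eq hα1 (hqnn _) (hpnn _)]
  exact ((((summable_rpow_mul_rpow_one_sub hα0.le hα1.le hqnn hpnn hq hp).hasSum.sub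
    ((summable_ite_pos hqnn hq).hasSum.mul_left α)).sub (hp.hasSum.mul_left (1 - α))).div_const _)

lemma tsum_ite_pos_zero_eq_sub (hq : Summable q)
    (hqA : Summable (fun y => if 0 < p y then q y else 0)) :
    (∑' y, if 0 < p y then 0 else q y) = ∑' y, q y - ∑' y, if 0 < p y then q y else 0 := by
  rw [← hq.tsum_sub hqA]
  exact tsum_congr fun y => by split <;> simp

end AlphaDivergence

theorem stmt_9_general {Y : Type*} (α : ℝ) (hα : α ∈ Set.Ioo (0 : ℝ) 1)
    (q p : Y → ℝ) (hqnn : ∀ y, 0 ≤ q y) (hqsum : ∑' y, q y = 1)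
    (hpnn : ∀ y, 0 ≤ p y) (hpsum : ∑' y, p y = 1) :
    Summable (fun y => if 0 < p y then
        p y * (((q y / p y) ^ α - α * (q y / p y) - (1 - α)) / (α * (α - 1))) else 0)
    ∧ Summable (fun y => q y ^ α * p y ^ (1 - α))
    ∧ (∑' y, if 0 < p y then
          p y * (((q y / p y) ^ α - α * (q y / p y) - (1 - α)) / (α * (α - 1))) else 0)
        + (∑' y, if 0 < p y then 0 else q y) / (1 - α)
      = (1 - ∑' y, q y ^ α * p y ^ (1 - α)) / (α * (1 - α)) := by
  obtain ⟨hα0, hα1⟩ := hα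
  have hq := summable_of_tsum_eq_one hqsum
  have hp := summable_of_tsum_eq_one hpsum
  have hdiv := hasSum_ite_pos_mul_alphaFun_div hα0 hα1 hqnn hpnn hq hp
  refine ⟨hdiv.summable, summable_rpow_mul_rpow_one_sub hα0.le hα1.le hqnn hpnn hq hp, ?_⟩
  rw [hdiv.tsum_eq, tsum_ite_pos_zero_eq_sub hq (summable_ite_pos hqnn hq), hqsum, hpsum]
  have : α - 1 ≠ 0 := sub_ne_zero.2 hα1.ne
  have : 1 - α ≠ 0 := sub_ne_zero.2 hα1.ne'
  field_simp
  ring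

/-- Connection between the extended α-divergence (with boundary term)
and the Hellinger sum: `D_α(π,p) = (1 − H_α(π,p))/(α(1 − α))`, together with the
relevant summability assertions. -/
theorem stmt_9 {Y : Type*} [Countable Y] (α : ℝ) (hα : α ∈ Set.Ioo (0 : ℝ) 1)
    (q p : Y → ℝ) (hqnn : ∀ y, 0 ≤ q y) (hqsum : ∑' y, q y = 1)
    (hpnn : ∀ y, 0 ≤ p y) (hpsum : ∑' y, p y = 1) :
    Summable (fun y => if 0 < p y then
        p y * (((q y / p y) ^ α - α * (q y / p y) - (1 - α)) / (α * (α - 1))) else 0)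
    ∧ Summable (fun y => q y ^ α * p y ^ (1 - α))
    ∧ (∑' y, if 0 < p y then
          p y * (((q y / p y) ^ α - α * (q y / p y) - (1 - α)) / (α * (α - 1))) else 0)
        + (∑' y, if 0 < p y then 0 else q y) / (1 - α)
      = (1 - ∑' y, q y ^ α * p y ^ (1 - α)) / (α * (1 - α)) :=
  stmt_9_general α hα q p hqnn hqsum hpnn hpsum
end

section
/- Let Y be a finite type, let p be a probability mass function on Y with support A := {y | p(y) > 0}, and let π and π' be probability mass functions on Y with π(y) > 0 and π'(y) > 0 for all y. For α ∈ (0,1) define H_α(q,p) := ∑_y q(y)^α·p(y)^{1−α} and D_α(q,p) := (1 − H_α(q,p))/(α·(1 − α)). If π(A) := ∑_{y ∈ A} π(y) is strictly greater than π'(A) := ∑_{y ∈ A} π'(y), then there exists α₀ ∈ (0,1) such that for all α with α₀ < α < 1 one has D_α(π,p) < D_α(π',p). -/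
/-!
Off the support `A` of `p` every term `q y ^ α * p y ^ (1 - α)` vanishes as soon as `α ≠ 1`, so
`H_α(q, p)` is a finite sum over `A`, and that sum is continuous at `α = 1` with value `q(A)`
(on `A` the exponent `1 - α` meets no `0 ^ 0`). Hence `H_α(q, p) > H_α(q', p)` for `α` near `1`,
and dividing `1 - H_α` by `α (1 - α) > 0` reverses the order.
-/

open Filter Topology Finset

theorem sum_rpow_mul_rpow_eq_sum_filter_pos {Y : Type*} [Fintype Y] (p q : Y → ℝ)
    (hp : ∀ y, 0 ≤ p y) {α : ℝ} (hα : α ≠ 1) :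
    ∑ y with 0 < p y, q y ^ α * p y ^ (1 - α) = ∑ y, q y ^ α * p y ^ (1 - α) := by
  refine sum_filter_of_ne fun y _ hy => lt_of_le_of_ne (hp y) fun hpy => hy ?_
  rw [← hpy, Real.zero_rpow (sub_ne_zero.mpr hα.symm), mul_zero]

theorem tendsto_sum_rpow_mul_rpow_nhds_one {Y : Type*} (p q : Y → ℝ) (s : Finset Y)
    (hs : ∀ y ∈ s, p y ≠ 0) :
    Tendsto (fun α : ℝ => ∑ y ∈ s, q y ^ α * p y ^ (1 - α)) (𝓝 1) (𝓝 (∑ y ∈ s, q y)) := by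
  refine tendsto_finsetSum s fun y hy => ?_
  have hq : ContinuousAt (fun α : ℝ => q y ^ α) 1 := Real.continuousAt_const_rpow' one_ne_zero
  have hp : ContinuousAt (fun α : ℝ => p y ^ (1 - α)) 1 :=
    (Real.continuousAt_const_rpow (hs y hy)).comp (continuousAt_const.sub continuousAt_id)
  simpa using hq.tendsto.mul hp.tendsto

theorem exists_Ioo_forall_of_eventually_nhdsLT_one {P : ℝ → Prop} (h : ∀ᶠ α in 𝓝[<] 1, P α) :
    ∃ α₀ ∈ Set.Ioo (0 : ℝ) 1, ∀ α : ℝ, α₀ < α → α < 1 → P α := by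
  obtain ⟨α₀, ⟨hα₀_ge, hα₀_lt⟩, hsub⟩ :=
    (mem_nhdsLT_iff_exists_mem_Ico_Ioo_subset (by norm_num : (1 / 2 : ℝ) < 1)).mp h
  exact ⟨α₀, ⟨by linarith, hα₀_lt⟩, fun α h₀ h₁ => hsub ⟨h₀, h₁⟩⟩

theorem stmt_16_general {Y : Type*} [Fintype Y]
    (p : Y → ℝ) (hpnn : ∀ y, 0 ≤ p y)
    (q q' : Y → ℝ)
    (hmass : (∑ y, if 0 < p y then q' y else 0) < ∑ y, if 0 < p y then q y else 0) :
    ∃ α₀ ∈ Set.Ioo (0 : ℝ) 1, ∀ α : ℝ, α₀ < α → α < 1 →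
      (1 - ∑ y, q y ^ α * p y ^ (1 - α)) / (α * (1 - α))
        < (1 - ∑ y, q' y ^ α * p y ^ (1 - α)) / (α * (1 - α)) := by
  rw [← sum_filter, ← sum_filter] at hmass
  have hA : ∀ y ∈ ({y | 0 < p y} : Finset Y), p y ≠ 0 := fun y hy => (mem_filter.mp hy).2.ne'
  have hgap : ∀ᶠ α in 𝓝 (1 : ℝ),
      ∑ y with 0 < p y, q' y ^ α * p y ^ (1 - α) < ∑ y with 0 < p y, q y ^ α * p y ^ (1 - α) :=
    (tendsto_sum_rpow_mul_rpow_nhds_one p q' _ hA).eventually_lt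
      (tendsto_sum_rpow_mul_rpow_nhds_one p q _ hA) hmass
  refine exists_Ioo_forall_of_eventually_nhdsLT_one ?_
  filter_upwards [nhdsWithin_le_nhds hgap, self_mem_nhdsWithin,
    nhdsWithin_le_nhds (lt_mem_nhds zero_lt_one)] with α hα (hα₁ : α < 1) hα₀
  rw [sum_rpow_mul_rpow_eq_sum_filter_pos p q hpnn hα₁.ne,
    sum_rpow_mul_rpow_eq_sum_filter_pos p q' hpnn hα₁.ne] at hα
  exact div_lt_div_of_pos_right (by linarith) (mul_pos hα₀ (sub_pos.mpr hα₁))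

/-- If `π` puts strictly more mass than `π'` on the support `A` of
the target `p`, then for all `α` close enough to `1` (within `(0,1)`) the
α-divergence of `π` to `p` is strictly smaller than that of `π'`. -/
theorem stmt_16 {Y : Type*} [Fintype Y]
    (p : Y → ℝ) (hpnn : ∀ y, 0 ≤ p y) (hpsum : ∑ y, p y = 1)
    (q q' : Y → ℝ)
    (hqpos : ∀ y, 0 < q y) (hqsum : ∑ y, q y = 1)
    (hq'pos : ∀ y, 0 < q' y) (hq'sum : ∑ y, q' y = 1)
    (hmass : (∑ y, if 0 < p y then q' y else 0) < ∑ y, if 0 < p y then q y else 0) :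
    ∃ α₀ ∈ Set.Ioo (0 : ℝ) 1, ∀ α : ℝ, α₀ < α → α < 1 →
      (1 - ∑ y, q y ^ α * p y ^ (1 - α)) / (α * (1 - α))
        < (1 - ∑ y, q' y ^ α * p y ^ (1 - α)) / (α * (1 - α)) :=
  stmt_16_general p hpnn q q' hmass
end

section
/- Let t be a real number with t > 0, and for α ∈ (0,1) define f_α(t) := (t^α − α·t − (1 − α))/(α·(α − 1)). Then f_α(t) tends to t·log t − t + 1 as α tends to 1 from the left within (0,1), and f_α(t) tends to t − 1 − log t as α tends to 0 from the right within (0,1). -/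
open Filter Topology

/-!
As functions of `α`, numerator and denominator of `f_α(t)` both vanish at `α = 0` and `α = 1`,
so each limit is the ratio of their `α`-derivatives, `(t ^ α * log t - t + 1) / (2 * α - 1)`.
-/

/-- Unlike `deriv.lhopital_zero_nhds`, this needs derivatives only at `a`: there `f x / g x` is
the quotient of the slopes of `f` and `g` at `a`. -/
theorem HasDerivAt.tendsto_div_nhdsNE_of_eq_zero {𝕜 : Type*} [NontriviallyNormedField 𝕜]
    {f g : 𝕜 → 𝕜} {f' g' a : 𝕜} (hf : HasDerivAt f f' a) (hg : HasDerivAt g g' a)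
    (hfa : f a = 0) (hga : g a = 0) (hg' : g' ≠ 0) :
    Tendsto (fun x => f x / g x) (𝓝[≠] a) (𝓝 (f' / g')) := by
  rw [hasDerivAt_iff_tendsto_slope] at hf hg
  refine (hf.div hg hg').congr' ?_
  filter_upwards [self_mem_nhdsWithin] with x hx
  rw [Pi.div_apply, slope_def_field, slope_def_field, hfa, hga, sub_zero, sub_zero,
    div_div_div_cancel_right₀ (sub_ne_zero.2 hx)]

theorem hasDerivAt_rpow_sub_mul_sub {t : ℝ} (ht : 0 < t) (a : ℝ) :
    HasDerivAt (fun α : ℝ => t ^ α - α * t - (1 - α)) (t ^ a * Real.log t - t + 1) a := by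
  refine (((Real.hasStrictDerivAt_const_rpow ht a).hasDerivAt.sub
    (hasDerivAt_mul_const t)).sub ((hasDerivAt_id a).const_sub 1)).congr_deriv ?_
  ring

theorem hasDerivAt_mul_sub_one (a : ℝ) : HasDerivAt (fun α : ℝ => α * (α - 1)) (2 * a - 1) a := by
  refine ((hasDerivAt_id a).mul ((hasDerivAt_id a).sub_const 1)).congr_deriv ?_
  simp only [id]
  ring

/-- For fixed `t > 0`, the α-divergence generator `f_α(t)` tends to
the reverse-KL generator `t·log t − t + 1` as `α → 1⁻` within `(0,1)`, and to the
forward-KL generator `t − 1 − log t` as `α → 0⁺` within `(0,1)`. -/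
theorem stmt_17 (t : ℝ) (ht : 0 < t) :
    Tendsto (fun α : ℝ => (t ^ α - α * t - (1 - α)) / (α * (α - 1)))
      (𝓝[Set.Ioo (0 : ℝ) 1] 1) (𝓝 (t * Real.log t - t + 1))
    ∧ Tendsto (fun α : ℝ => (t ^ α - α * t - (1 - α)) / (α * (α - 1)))
      (𝓝[Set.Ioo (0 : ℝ) 1] 0) (𝓝 (t - 1 - Real.log t)) := by
  constructor
  · have h := (hasDerivAt_rpow_sub_mul_sub ht 1).tendsto_div_nhdsNE_of_eq_zero
      (hasDerivAt_mul_sub_one 1) (by simp) (by simp) (by norm_num)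
    rw [Real.rpow_one, show (2 : ℝ) * 1 - 1 = 1 by norm_num, div_one] at h
    exact h.mono_left (nhdsWithin_mono _ fun _ hα => hα.2.ne)
  · have h := (hasDerivAt_rpow_sub_mul_sub ht 0).tendsto_div_nhdsNE_of_eq_zero
      (hasDerivAt_mul_sub_one 0) (by simp) (by simp) (by norm_num)
    rw [Real.rpow_zero, show (2 : ℝ) * 0 - 1 = -1 by norm_num, div_neg, div_one,
      show -(1 * Real.log t - t + 1) = t - 1 - Real.log t by ring] at h
    exact h.mono_left (nhdsWithin_mono _ fun _ hα => hα.1.ne')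
end
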